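/- arXiv:2602.15180 — 4 statements merged into one kernel-verified Lean document; each statement's English description precedes it below -/
import Mathlib

section
/- Fix n ≥ 1 and an integer M ≥ 0. Let V be the complex vector space of finitely supported functions ℕⁿ → ℂ, with standard basis {e_m : m ∈ ℕⁿ}, and for j ∈ {1,…,n} define linear maps on V by a_j^† e_m = √(m_j + 1)·e_{m+δ_j} and a_j e_m = √(m_j)·e_{m−δ_j} (with a_j e_m = 0 when m_j = 0), where δ_j is the j-th standard unit vector. Let V_M be the linear span of {e_m : m₁ + ⋯ + m_n = M}, and for j ≠ k let E_{jk} := a_j^† ∘ a_k. If W is a complex linear subspace of V_M satisfying E_{jk}(W) ⊆ W for all j ≠ k in {1,…,n}, then W = {0} or W = V_M. In other words, the totally symmetric representation obtained from the Jordan–Schwinger construction is irreducible. -/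
open Finsupp Function

/-- Move one quantum from slot `k` to slot `j`. -/
private def mv {n : ℕ} (j k : Fin n) (m : Fin n → ℕ) : Fin n → ℕ :=
  Function.update (Function.update m k (m k - 1)) j (m j + 1)

private lemma mv_apply_j {n} {j k : Fin n} (m : Fin n → ℕ) : mv j k m j = m j + 1 := by
  simp [mv]

private lemma mv_apply_k {n} {j k : Fin n} (h : j ≠ k) (m : Fin n → ℕ) :
    mv j k m k = m k - 1 := by
  simp [mv, Function.update_of_ne (Ne.symm h)]

private lemma mv_apply_ne {n} {j k : Fin n} (m : Fin n → ℕ) {i : Fin n}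
    (hij : i ≠ j) (hik : i ≠ k) : mv j k m i = m i := by
  simp [mv, Function.update_of_ne hij, Function.update_of_ne hik]

private lemma mv_mv {n} {j k : Fin n} (h : j ≠ k) {m : Fin n → ℕ} (hm : 1 ≤ m k) :
    mv k j (mv j k m) = m := by
  funext i
  by_cases hij : i = j
  · subst hij
    rw [mv_apply_k h.symm, mv_apply_j]
    omega
  by_cases hik : i = k
  · subst hik
    rw [mv_apply_j, mv_apply_k h]
    omega
  · rw [mv_apply_ne _ hik hij, mv_apply_ne _ hij hik]

private lemma sum_mv {n} {j k : Fin n} (h : j ≠ k) {m : Fin n → ℕ} (hm : 1 ≤ m k) :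
    ∑ i, mv j k m i = ∑ i, m i := by
  have hk : k ∈ Finset.univ \ ({j} : Finset (Fin n)) := by
    simp [Ne.symm h]
  have h1 : ∑ i, mv j k m i
      = (m j + 1) + ((m k - 1) + ∑ i ∈ (Finset.univ \ {j}) \ {k}, m i) := by
    rw [show (∑ i, mv j k m i)
        = ∑ i, Function.update (Function.update m k (m k - 1)) j (m j + 1) i from rfl,
      Finset.sum_update_of_mem (Finset.mem_univ j), Finset.sum_update_of_mem hk]
  have h2 : ∑ i, m i = (∑ i ∈ (Finset.univ \ {j}) \ {k}, m i) + m k + m j := by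
    rw [Finset.sum_eq_sum_sdiff_singleton_add (Finset.mem_univ j) m,
      Finset.sum_eq_sum_sdiff_singleton_add hk m]
  omega

private lemma E_single {n : ℕ}
    (a adag : Fin n → ((Fin n → ℕ) →₀ ℂ) →ₗ[ℂ] ((Fin n → ℕ) →₀ ℂ))
    (ha : ∀ (j : Fin n) (m : Fin n → ℕ),
      a j (Finsupp.single m 1) =
        ((Real.sqrt (m j) : ℝ) : ℂ) • Finsupp.single (Function.update m j (m j - 1)) 1)
    (hadag : ∀ (j : Fin n) (m : Fin n → ℕ),
      adag j (Finsupp.single m 1) =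
        ((Real.sqrt (m j + 1) : ℝ) : ℂ) • Finsupp.single (Function.update m j (m j + 1)) 1)
    {j k : Fin n} (hjk : j ≠ k) (m : Fin n → ℕ) :
    (adag j ∘ₗ a k) (Finsupp.single m 1)
      = (((Real.sqrt (m k) * Real.sqrt (m j + 1)) : ℝ) : ℂ) • Finsupp.single (mv j k m) 1 := by
  rw [LinearMap.comp_apply, ha, map_smul, hadag, smul_smul, mv,
    Function.update_of_ne hjk]
  push_cast
  ring_nf

private lemma E_apply {n : ℕ}
    (a adag : Fin n → ((Fin n → ℕ) →₀ ℂ) →ₗ[ℂ] ((Fin n → ℕ) →₀ ℂ))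
    (ha : ∀ (j : Fin n) (m : Fin n → ℕ),
      a j (Finsupp.single m 1) =
        ((Real.sqrt (m j) : ℝ) : ℂ) • Finsupp.single (Function.update m j (m j - 1)) 1)
    (hadag : ∀ (j : Fin n) (m : Fin n → ℕ),
      adag j (Finsupp.single m 1) =
        ((Real.sqrt (m j + 1) : ℝ) : ℂ) • Finsupp.single (Function.update m j (m j + 1)) 1)
    {j k : Fin n} (hjk : j ≠ k) (v : (Fin n → ℕ) →₀ ℂ) (q : Fin n → ℕ) :
    ((adag j ∘ₗ a k) v) q =
      if 1 ≤ q j then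
        ((Real.sqrt (q k + 1) * Real.sqrt (q j) : ℝ) : ℂ) * v (mv k j q) else 0 := by
  have hv : v = v.sum Finsupp.single := (Finsupp.sum_single v).symm
  conv_lhs => rw [hv]
  rw [map_finsuppSum, Finsupp.sum_apply, Finsupp.sum]
  have hterm : ∀ m : Fin n → ℕ,
      ((adag j ∘ₗ a k) (Finsupp.single m (v m))) q
        = if mv j k m = q
            then v m * (((Real.sqrt (m k) * Real.sqrt (m j + 1)) : ℝ) : ℂ) else 0 := by
    intro m
    rw [← Finsupp.smul_single_one m (v m), map_smul, E_single a adag ha hadag hjk m]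
    rw [Finsupp.smul_apply, Finsupp.smul_apply, Finsupp.single_apply]
    split <;> simp
  simp only [hterm]
  by_cases hq : 1 ≤ q j
  · rw [if_pos hq]
    rw [Finset.sum_eq_single (mv k j q)]
    · have h1 : mv j k (mv k j q) = q := mv_mv (Ne.symm hjk) hq
      rw [if_pos h1]
      have h2 : (mv k j q) k = q k + 1 := mv_apply_j _
      have h3 : (mv k j q) j = q j - 1 := mv_apply_k (Ne.symm hjk) _
      rw [h2, h3]
      have h4 : ((q j - 1 : ℕ) : ℝ) + 1 = (q j : ℝ) := by
        push_cast [Nat.cast_sub hq]; ring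
      rw [h4]
      push_cast
      ring
    · intro m hm hne
      by_cases hmq : mv j k m = q
      · have hmk : m k = 0 := by
          by_contra hc
          exact hne (by rw [← hmq, mv_mv hjk (by omega)])
        simp [hmk]
      · simp [hmq]
    · intro hns
      rw [Finsupp.notMem_support_iff.mp hns]
      simp
  · rw [if_neg hq]
    apply Finset.sum_eq_zero
    intro m _
    have : ¬ (mv j k m = q) := by
      intro hc
      apply hq
      rw [← hc, mv_apply_j]
      omega
    simp [this]


/-- The totally symmetric Jordan–Schwinger representation is irreducible:
any subspace `W ⊆ V_M` invariant under all `Eⱼₖ := aⱼ† ∘ aₖ` with `j ≠ k` is `{0}` or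
all of `V_M`. -/
theorem stmt_8 (n : ℕ) (hn : 1 ≤ n) (M : ℕ)
    (a adag : Fin n → ((Fin n → ℕ) →₀ ℂ) →ₗ[ℂ] ((Fin n → ℕ) →₀ ℂ))
    (ha : ∀ (j : Fin n) (m : Fin n → ℕ),
      a j (Finsupp.single m 1) =
        ((Real.sqrt (m j) : ℝ) : ℂ) • Finsupp.single (Function.update m j (m j - 1)) 1)
    (hadag : ∀ (j : Fin n) (m : Fin n → ℕ),
      adag j (Finsupp.single m 1) =
        ((Real.sqrt (m j + 1) : ℝ) : ℂ) • Finsupp.single (Function.update m j (m j + 1)) 1)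
    (VM : Submodule ℂ ((Fin n → ℕ) →₀ ℂ))
    (hVM : VM = Submodule.span ℂ
      {v | ∃ m : Fin n → ℕ, (∑ i, m i) = M ∧ v = Finsupp.single m 1})
    (W : Submodule ℂ ((Fin n → ℕ) →₀ ℂ)) (hWle : W ≤ VM)
    (hWinv : ∀ j k : Fin n, j ≠ k → ∀ w ∈ W, (adag j ∘ₗ a k) w ∈ W) :
    W = ⊥ ∨ W = VM := by
  classical
  -- membership in VM means support lives on level `M`
  have hVMs : VM = Finsupp.supported ℂ ℂ {m : Fin n → ℕ | (∑ i, m i) = M} := by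
    rw [hVM, Finsupp.supported_eq_span_single]
    congr 1
    ext v
    constructor
    · rintro ⟨m, hm, rfl⟩
      exact ⟨m, hm, rfl⟩
    · rintro ⟨m, hm, rfl⟩
      exact ⟨m, hm, rfl⟩
  have hsupp : ∀ w ∈ W, ∀ m : Fin n → ℕ, w m ≠ 0 → (∑ i, m i) = M := by
    intro w hw m hm
    have := hWle hw
    rw [hVMs, Finsupp.mem_supported] at this
    exact this (Finsupp.mem_support_iff.mpr hm)
  -- single-step raising inside W
  have stepA : ∀ (j k : Fin n), j ≠ k → ∀ m : Fin n → ℕ, 1 ≤ m k →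
      Finsupp.single m 1 ∈ W → Finsupp.single (mv j k m) 1 ∈ W := by
    intro j k hjk m hmk hmW
    have h := hWinv j k hjk _ hmW
    rw [E_single a adag ha hadag hjk m] at h
    have hc : (((Real.sqrt (m k) * Real.sqrt (m j + 1)) : ℝ) : ℂ) ≠ 0 := by
      have h1 : (0:ℝ) < Real.sqrt (m k) := Real.sqrt_pos.mpr (by
        have : (1:ℝ) ≤ (m k : ℝ) := by exact_mod_cast hmk
        linarith)
      have h2 : (0:ℝ) < Real.sqrt (m j + 1) := Real.sqrt_pos.mpr (by positivity)
      simp only [ne_eq, Complex.ofReal_eq_zero]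
      positivity
    have h2 := Submodule.smul_mem W (((Real.sqrt (m k) * Real.sqrt (m j + 1)) : ℝ) : ℂ)⁻¹ h
    rwa [smul_smul, inv_mul_cancel₀ hc, one_smul] at h2
  set i0 : Fin n := ⟨0, hn⟩ with hi0
  set top : Fin n → ℕ := fun i => if i = i0 then M else 0 with htopdef
  have top_sum : ∑ i, top i = M := by
    simp [htopdef]
  have eq_top : ∀ m : Fin n → ℕ, (∑ i, m i) = M →
      (∑ i ∈ Finset.univ \ {i0}, m i) = 0 → m = top := by
    intro m hsum h0
    have hzero : ∀ i, i ≠ i0 → m i = 0 := by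
      intro i hi
      have := Finset.sum_eq_zero_iff.mp h0 i (by simp [hi])
      exact this
    have hm0 : m i0 = M := by
      rw [Finset.sum_eq_sum_sdiff_singleton_add (Finset.mem_univ i0) m, h0] at hsum
      simpa using hsum
    funext i
    by_cases hi : i = i0
    · simp [hi, htopdef, hm0]
    · simp [hi, htopdef, hzero i hi]
  have sum_rest_mv : ∀ (m : Fin n → ℕ) (k : Fin n), k ≠ i0 → 1 ≤ m k →
      (∑ i ∈ Finset.univ \ {i0}, mv i0 k m i) + 1 = ∑ i ∈ Finset.univ \ {i0}, m i := by
    intro m k hki hk1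
    have hk : k ∈ Finset.univ \ ({i0} : Finset (Fin n)) := by simp [hki]
    have hcongr : ∑ i ∈ Finset.univ \ {i0}, mv i0 k m i
        = ∑ i ∈ Finset.univ \ {i0}, Function.update m k (m k - 1) i := by
      apply Finset.sum_congr rfl
      intro i hi
      have hii0 : i ≠ i0 := by simpa using (Finset.mem_sdiff.mp hi).2
      exact Function.update_of_ne hii0 _ _
    rw [hcongr, Finset.sum_update_of_mem hk,
      Finset.sum_eq_sum_sdiff_singleton_add hk m]
    omega
  have reach_top : ∀ d (m : Fin n → ℕ), (∑ i, m i) = M →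
      (∑ i ∈ Finset.univ \ {i0}, m i) = d →
      Finsupp.single m 1 ∈ W → Finsupp.single top 1 ∈ W := by
    intro d
    induction d with
    | zero =>
      intro m hsum h0 hmem
      rwa [eq_top m hsum h0] at hmem
    | succ d ih =>
      intro m hsum hd hmem
      have hex : ∃ k, k ≠ i0 ∧ 1 ≤ m k := by
        by_contra hcon
        push_neg at hcon
        have : ∑ i ∈ Finset.univ \ {i0}, m i = 0 := by
          apply Finset.sum_eq_zero
          intro i hi
          have hii0 : i ≠ i0 := by simpa using (Finset.mem_sdiff.mp hi).2
          have := hcon i hii0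
          omega
        omega
      obtain ⟨k, hki, hk1⟩ := hex
      have hi0k : i0 ≠ k := fun h => hki h.symm
      have hmem' := stepA i0 k hi0k m hk1 hmem
      have hsum' : ∑ i, mv i0 k m i = M := by rw [sum_mv hi0k hk1, hsum]
      have hd' : (∑ i ∈ Finset.univ \ {i0}, mv i0 k m i) = d := by
        have := sum_rest_mv m k hki hk1
        omega
      exact ih (mv i0 k m) hsum' hd' hmem'
  have from_top : ∀ d (m : Fin n → ℕ), (∑ i, m i) = M →
      (∑ i ∈ Finset.univ \ {i0}, m i) = d →
      Finsupp.single top 1 ∈ W → Finsupp.single m 1 ∈ W := by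
    intro d
    induction d with
    | zero =>
      intro m hsum h0 hmem
      rwa [eq_top m hsum h0]
    | succ d ih =>
      intro m hsum hd hmem
      have hex : ∃ k, k ≠ i0 ∧ 1 ≤ m k := by
        by_contra hcon
        push_neg at hcon
        have : ∑ i ∈ Finset.univ \ {i0}, m i = 0 := by
          apply Finset.sum_eq_zero
          intro i hi
          have hii0 : i ≠ i0 := by simpa using (Finset.mem_sdiff.mp hi).2
          have := hcon i hii0
          omega
        omega
      obtain ⟨k, hki, hk1⟩ := hex
      have hi0k : i0 ≠ k := fun h => hki h.symm
      have hsum' : ∑ i, mv i0 k m i = M := by rw [sum_mv hi0k hk1, hsum]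
      have hd' : (∑ i ∈ Finset.univ \ {i0}, mv i0 k m i) = d := by
        have := sum_rest_mv m k hki hk1
        omega
      have hmem' : Finsupp.single (mv i0 k m) 1 ∈ W := ih (mv i0 k m) hsum' hd' hmem
      have h1 : 1 ≤ (mv i0 k m) i0 := by
        rw [mv_apply_j]
        omega
      have := stepA k i0 hki (mv i0 k m) h1 hmem'
      rwa [mv_mv hi0k hk1] at this
  -- main support-shrinking induction
  have key : ∀ s : ℕ, ∀ w : (Fin n → ℕ) →₀ ℂ, w ∈ W → w ≠ 0 → w.support.card ≤ s →
      Finsupp.single top 1 ∈ W := by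
    intro s
    induction s with
    | zero =>
      intro w hW hne hcard
      exact absurd (Finsupp.support_eq_empty.mp (Finset.card_eq_zero.mp (le_antisymm hcard (Nat.zero_le _)))) hne
    | succ s ih =>
      intro w hW hne hcard
      by_cases h1 : w.support.card ≤ 1
      · -- singleton support
        have hpos : 0 < w.support.card :=
          Finset.card_pos.mpr (Finsupp.support_nonempty_iff.mpr hne)
        obtain ⟨m, hm⟩ := Finset.card_eq_one.mp (le_antisymm h1 hpos)
        obtain ⟨hne0, hw⟩ := Finsupp.support_eq_singleton.mp hm
        have hmW : Finsupp.single m 1 ∈ W := by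
          have heq : Finsupp.single m 1 = (w m)⁻¹ • w := by
            conv_rhs => rw [hw]
            simp [Finsupp.smul_single, Finsupp.single_eq_same, inv_mul_cancel₀ hne0]
          exact heq ▸ Submodule.smul_mem W (w m)⁻¹ hW
        exact reach_top _ m (hsupp w hW m hne0) rfl hmW
      · push_neg at h1
        obtain ⟨m1, hm1, m2, hm2, hm12⟩ := Finset.one_lt_card.mp h1
        have core : ∀ (p pp : Fin n → ℕ) (k : Fin n), w p ≠ 0 → w pp ≠ 0 → p k < pp k →
            Finsupp.single top 1 ∈ W := by
          intro p pp k hp hpp hplt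
          -- there is an index different from k
          have hjex : ∃ j : Fin n, j ≠ k := by
            by_contra hcon
            push_neg at hcon
            have huniv : (Finset.univ : Finset (Fin n)) = {k} := by
              ext j; simp [hcon j]
            have hsp := hsupp w hW p hp
            have hspp := hsupp w hW pp hpp
            rw [huniv, Finset.sum_singleton] at hsp hspp
            omega
          obtain ⟨j, hjk⟩ := hjex
          -- generic facts about E = adag j ∘ₗ a k on elements of W
          have nonzero : ∀ (v : (Fin n → ℕ) →₀ ℂ) (mm : Fin n → ℕ), 1 ≤ mm k → v mm ≠ 0 →
              ((adag j ∘ₗ a k) v) (mv j k mm) ≠ 0 := by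
            intro v mm hmmk hvmm
            rw [E_apply a adag ha hadag hjk]
            have hqj : 1 ≤ (mv j k mm) j := by rw [mv_apply_j]; omega
            rw [if_pos hqj, mv_mv hjk hmmk]
            apply mul_ne_zero _ hvmm
            have hpos : (0:ℝ) < Real.sqrt ((mv j k mm) k + 1) * Real.sqrt ((mv j k mm) j) := by
              apply mul_pos
              · exact Real.sqrt_pos.mpr (by positivity)
              · apply Real.sqrt_pos.mpr
                have : (1:ℝ) ≤ ((mv j k mm) j : ℝ) := by exact_mod_cast hqj
                linarith
            simp only [ne_eq, Complex.ofReal_eq_zero]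
            positivity
          have supp_sub : ∀ (v : (Fin n → ℕ) →₀ ℂ) (q : Fin n → ℕ),
              ((adag j ∘ₗ a k) v) q ≠ 0 → 1 ≤ q j ∧ v (mv k j q) ≠ 0 := by
            intro v q hq
            rw [E_apply a adag ha hadag hjk] at hq
            by_cases hqj : 1 ≤ q j
            · rw [if_pos hqj] at hq
              exact ⟨hqj, fun h => hq (by rw [h, mul_zero])⟩
            · rw [if_neg hqj] at hq
              exact absurd rfl hq
          have card_le : ∀ v : (Fin n → ℕ) →₀ ℂ,
              ((adag j ∘ₗ a k) v).support.card ≤ v.support.card := by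
            intro v
            apply Finset.card_le_card_of_injOn (mv k j)
            · intro q hq
              have := supp_sub v q (Finsupp.mem_support_iff.mp hq)
              exact Finsupp.mem_support_iff.mpr this.2
            · intro q hq q' hq' heq
              have h1 := (supp_sub v q (Finsupp.mem_support_iff.mp hq)).1
              have h2 := (supp_sub v q' (Finsupp.mem_support_iff.mp hq')).1
              rw [← mv_mv (Ne.symm hjk) h1, heq, mv_mv (Ne.symm hjk) h2]
          -- inner induction: push the k-weight down
          have inner : ∀ t : ℕ, t ≤ p k → ∃ v : (Fin n → ℕ) →₀ ℂ, v ∈ W ∧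
              v.support.card ≤ w.support.card ∧
              ∃ pt ppt : Fin n → ℕ, v pt ≠ 0 ∧ v ppt ≠ 0 ∧ pt k = p k - t ∧ pt k < ppt k := by
            intro t
            induction t with
            | zero =>
              intro _
              exact ⟨w, hW, le_rfl, p, pp, hp, hpp, by omega, hplt⟩
            | succ t iht =>
              intro ht
              obtain ⟨v, hvW, hvcard, pt, ppt, hvpt, hvppt, hptk, hlt⟩ := iht (by omega)
              have hpt1 : 1 ≤ pt k := by omega
              have hppt1 : 1 ≤ ppt k := by omega
              refine ⟨(adag j ∘ₗ a k) v, hWinv j k hjk v hvW,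
                le_trans (card_le v) hvcard, mv j k pt, mv j k ppt,
                nonzero v pt hpt1 hvpt, nonzero v ppt hppt1 hvppt, ?_, ?_⟩
              · rw [mv_apply_k hjk]; omega
              · rw [mv_apply_k hjk, mv_apply_k hjk]; omega
          obtain ⟨v, hvW, hvcard, pt, ppt, hvpt, hvppt, hptk, hlt⟩ := inner (p k) le_rfl
          have hptk0 : pt k = 0 := by omega
          set v' := (adag j ∘ₗ a k) v with hv'
          have hv'W : v' ∈ W := hWinv j k hjk v hvW
          have hv'ne : v' ≠ 0 := by
            intro hcon
            have := nonzero v ppt (by omega) hvppt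
            rw [← hv', hcon] at this
            exact this rfl
          -- strict card drop: pt is not hit by the injection
          have hcard' : v'.support.card < v.support.card := by
            have himage : v'.support.image (mv k j) ⊆ v.support := by
              intro q hq
              obtain ⟨q', hq', rfl⟩ := Finset.mem_image.mp hq
              exact Finsupp.mem_support_iff.mpr
                (supp_sub v q' (Finsupp.mem_support_iff.mp hq')).2
            have hinj : Set.InjOn (mv k j) v'.support := by
              intro q hq q' hq' heq
              have h1 := (supp_sub v q (Finsupp.mem_support_iff.mp hq)).1
              have h2 := (supp_sub v q' (Finsupp.mem_support_iff.mp hq')).1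
              rw [← mv_mv (Ne.symm hjk) h1, heq, mv_mv (Ne.symm hjk) h2]
            have hcardeq : v'.support.card = (v'.support.image (mv k j)).card :=
              (Finset.card_image_of_injOn hinj).symm
            have hptnot : pt ∉ v'.support.image (mv k j) := by
              intro hcon
              obtain ⟨q, hq, hqe⟩ := Finset.mem_image.mp hcon
              have : pt k = q k + 1 := by rw [← hqe, mv_apply_j]
              omega
            have hss : v'.support.image (mv k j) ⊂ v.support := by
              rw [Finset.ssubset_iff_of_subset himage]
              exact ⟨pt, Finsupp.mem_support_iff.mpr hvpt, hptnot⟩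
            rw [hcardeq]
            exact Finset.card_lt_card hss
          exact ih v' hv'W hv'ne (by omega)
        have hm1' := Finsupp.mem_support_iff.mp hm1
        have hm2' := Finsupp.mem_support_iff.mp hm2
        have hkex : ∃ k, m1 k ≠ m2 k := by
          by_contra hcon
          push_neg at hcon
          exact hm12 (funext hcon)
        obtain ⟨k, hk⟩ := hkex
        rcases Nat.lt_or_ge (m1 k) (m2 k) with h | h
        · exact core m1 m2 k hm1' hm2' h
        · exact core m2 m1 k hm2' hm1' (by omega)
  -- conclusion
  rcases eq_or_ne W ⊥ with hbot | hbot
  · exact Or.inl hbot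
  right
  obtain ⟨w, hwW, hwne⟩ := Submodule.ne_bot_iff W |>.mp hbot
  have htop : Finsupp.single top 1 ∈ W := key w.support.card w hwW hwne le_rfl
  apply le_antisymm hWle
  rw [hVM]
  apply Submodule.span_le.mpr
  rintro v ⟨m, hm, rfl⟩
  exact from_top _ m hm rfl htop
end

section
/- The Hermite functions are eigenfunctions of the Fourier transform with eigenvalue i^m: for every m ∈ ℕ and every y ∈ ℝ, ∫_ℝ e^{i x y} ψ_m(x) dx = √(2π) · i^m · ψ_m(y), where the integral is of the complex-valued function x ↦ e^{i x y} ψ_m(x). -/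
/-- The `m`-th physicist's Hermite polynomial as a function,
`H_m(x) = (-1)^m e^{x²} (dᵐ/dxᵐ) e^{-x²}`. -/
noncomputable def physHermite (m : ℕ) (x : ℝ) : ℝ :=
  (-1 : ℝ) ^ m * Real.exp (x ^ 2) * iteratedDeriv m (fun t : ℝ => Real.exp (-t ^ 2)) x

/-- The `m`-th Hermite function `ψ_m(x) = (2^m m! √π)^{-1/2} e^{-x²/2} H_m(x)`. -/
noncomputable def hermiteFun (m : ℕ) (x : ℝ) : ℝ :=
  ((2 : ℝ) ^ m * (Nat.factorial m : ℝ) * Real.sqrt Real.pi) ^ (-(1 : ℝ) / 2) *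
    Real.exp (-x ^ 2 / 2) * physHermite m x

/-!
Write `Tf(y) = ∫ e^{ixy} f(x) dx` and `φ_m(x) = e^{-x²/2} H_m(x)`, so that `ψ_m` is a constant
multiple of `φ_m`. The `H_m` satisfy `H_{m+1} = 2x H_m - H_m'`, hence `φ_{m+1} = x φ_m - φ_m'`.
Under `T`, multiplication by `x` becomes `-i d/dy` and `d/dx` becomes multiplication by `-iy`, so
`T(x f - f') = i (y - d/dy) Tf`. Consequently, if `Tf = c f` then `T(x f - f') = i c (x f - f')`.
Starting from the Gaussian `φ_0`, with `Tφ_0 = √(2π) φ_0`, induction gives `Tφ_m = √(2π) iᵐ φ_m`.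
-/

open MeasureTheory Complex Polynomial
open scoped FourierTransform Real

section

variable {E : Type*} [NormedAddCommGroup E] [NormedSpace ℂ E]

theorem norm_cexp_I_mul_ofReal_mul_ofReal (x y : ℝ) : ‖cexp (I * x * y)‖ = 1 := by
  rw [show I * x * y = ((x * y : ℝ) : ℂ) * I by push_cast; ring, norm_exp_ofReal_mul_I]

theorem MeasureTheory.Integrable.cexp_mul_smul {f : ℝ → E} (hf : Integrable f) (y : ℝ) :
    Integrable fun x : ℝ => cexp (I * x * y) • f x :=
  hf.bdd_smul 1 (by fun_prop : Continuous fun x : ℝ => cexp (I * x * y)).aestronglyMeasurable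
    (ae_of_all _ fun x => (norm_cexp_I_mul_ofReal_mul_ofReal x y).le)

theorem integral_cexp_mul_smul_eq_fourier (f : ℝ → E) (y : ℝ) :
    ∫ x : ℝ, cexp (I * x * y) • f x = 𝓕 f (-(y / (2 * π))) := by
  rw [Real.fourier_real_eq_integral_exp_smul]
  congr with x
  congr 2
  push_cast
  field_simp

theorem hasDerivAt_integral_cexp_mul_smul {f : ℝ → E} (hf : Integrable f)
    (hxf : Integrable fun x : ℝ => x • f x) (y : ℝ) :
    HasDerivAt (fun y : ℝ => ∫ x : ℝ, cexp (I * x * y) • f x)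
      (I • ∫ x : ℝ, cexp (I * x * y) • x • f x) y := by
  have hscale : HasDerivAt (fun y : ℝ => -(y / (2 * π))) (-(2 * π)⁻¹) y := by
    simpa using ((hasDerivAt_id y).div_const (2 * π)).fun_neg
  have h := (Real.hasDerivAt_fourier hf hxf _).scomp y hscale
  simp only [Function.comp_def, ← integral_cexp_mul_smul_eq_fourier] at h
  convert h using 1
  rw [← integral_smul, ← integral_smul]
  congr with x
  rw [← Complex.coe_smul, ← Complex.coe_smul, smul_smul, smul_smul, smul_smul, smul_smul]
  congr 1
  push_cast
  field_simp

theorem integral_cexp_mul_smul_deriv {f : ℝ → E} (hf : Integrable f)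
    (h'f : Differentiable ℝ f) (hf' : Integrable (deriv f)) (y : ℝ) :
    ∫ x : ℝ, cexp (I * x * y) • deriv f x = (-I * y) • ∫ x : ℝ, cexp (I * x * y) • f x := by
  rw [integral_cexp_mul_smul_eq_fourier, integral_cexp_mul_smul_eq_fourier,
    Real.fourier_deriv hf h'f hf']
  push_cast
  field_simp

theorem integral_cexp_mul_smul_sub_deriv {f f' : ℝ → E} {c : ℂ} (hf : Integrable f)
    (hxf : Integrable fun x : ℝ => x • f x) (hderiv : ∀ x, HasDerivAt f (f' x) x)
    (hf' : Integrable f') (heig : ∀ y : ℝ, ∫ x : ℝ, cexp (I * x * y) • f x = c • f y) (y : ℝ) :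
    ∫ x : ℝ, cexp (I * x * y) • (x • f x - f' x) = (I * c) • (y • f y - f' y) := by
  have hmul : ∫ x : ℝ, cexp (I * x * y) • x • f x = (-I * c) • f' y := by
    have h := hasDerivAt_integral_cexp_mul_smul hf hxf y
    simp only [heig] at h
    calc ∫ x : ℝ, cexp (I * x * y) • x • f x
        = (-I) • I • ∫ x : ℝ, cexp (I * x * y) • x • f x := by
          rw [smul_smul, neg_mul, I_mul_I, neg_neg, one_smul]
      _ = (-I * c) • f' y := by rw [h.unique ((hderiv y).const_smul c), smul_smul]
  have hderiv_eq : deriv f = f' := funext fun x => (hderiv x).deriv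
  have hdiff : ∫ x : ℝ, cexp (I * x * y) • f' x = (-I * y) • c • f y := by
    rw [← heig, ← hderiv_eq]
    exact integral_cexp_mul_smul_deriv hf (fun x => (hderiv x).differentiableAt)
      (hderiv_eq ▸ hf') y
  simp only [smul_sub]
  rw [integral_sub (hxf.cexp_mul_smul y) (hf'.cexp_mul_smul y), hmul, hdiff, ← Complex.coe_smul]
  module

end

noncomputable def physHermitePoly : ℕ → ℝ[X]
  | 0 => 1
  | n + 1 => 2 * X * physHermitePoly n - derivative (physHermitePoly n)

theorem iteratedDeriv_exp_neg_sq (n : ℕ) :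
    iteratedDeriv n (fun t : ℝ => Real.exp (-t ^ 2)) =
      fun x => (-1) ^ n * (physHermitePoly n).eval x * Real.exp (-x ^ 2) := by
  induction n with
  | zero => simp [physHermitePoly]
  | succ n ih =>
    rw [iteratedDeriv_succ, ih]
    funext x
    have hexp : HasDerivAt (fun x : ℝ => Real.exp (-x ^ 2)) (-(2 * x) * Real.exp (-x ^ 2)) x := by
      simpa [mul_comm] using ((hasDerivAt_pow 2 x).fun_neg).exp
    have h := (((physHermitePoly n).hasDerivAt x).const_mul ((-1 : ℝ) ^ n)).fun_mul hexp
    rw [h.deriv, physHermitePoly, eval_sub, eval_mul, eval_mul, eval_X, eval_ofNat]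
    ring

theorem physHermite_eq_eval (n : ℕ) (x : ℝ) : physHermite n x = (physHermitePoly n).eval x := by
  have hexp : Real.exp (x ^ 2) * Real.exp (-x ^ 2) = 1 := by rw [← Real.exp_add]; simp
  have hsign : ((-1 : ℝ) ^ n) * (-1) ^ n = 1 := by rw [← mul_pow]; simp
  rw [physHermite, iteratedDeriv_exp_neg_sq]
  linear_combination ((physHermitePoly n).eval x * Real.exp (x ^ 2) * Real.exp (-x ^ 2)) * hsign
    + (physHermitePoly n).eval x * hexp

noncomputable def gaussianPoly (p : ℝ[X]) (x : ℝ) : ℝ := Real.exp (-x ^ 2 / 2) * p.eval x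

theorem integrable_gaussianPoly (p : ℝ[X]) : Integrable (gaussianPoly p) := by
  induction p using Polynomial.induction_on' with
  | add p q hp hq =>
    refine (hp.add hq).congr (ae_of_all _ fun x => ?_)
    simp only [gaussianPoly, Pi.add_apply, eval_add, mul_add]
  | monomial n a =>
    have h := integrable_rpow_mul_exp_neg_mul_sq (b := 1 / 2) (by norm_num) (s := n)
      (neg_one_lt_zero.trans_le n.cast_nonneg)
    refine (h.const_mul a).congr (ae_of_all _ fun x => ?_)
    simp only [gaussianPoly, eval_monomial, Real.rpow_natCast]
    ring_nf

theorem gaussianPoly_X_mul (p : ℝ[X]) (x : ℝ) : gaussianPoly (X * p) x = x * gaussianPoly p x := by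
  simp only [gaussianPoly, eval_mul, eval_X]
  ring

theorem hasDerivAt_gaussianPoly (p : ℝ[X]) (x : ℝ) :
    HasDerivAt (gaussianPoly p) (gaussianPoly (derivative p - X * p) x) x := by
  have hexp : HasDerivAt (fun x : ℝ => Real.exp (-x ^ 2 / 2)) (-x * Real.exp (-x ^ 2 / 2)) x := by
    convert ((hasDerivAt_pow 2 x).fun_neg.div_const 2).exp using 1
    ring
  refine (hexp.fun_mul (p.hasDerivAt x)).congr_deriv ?_
  simp only [gaussianPoly, eval_sub, eval_mul, eval_X]
  ring

theorem gaussianPoly_two_X_mul_sub_derivative (p : ℝ[X]) (x : ℝ) :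
    gaussianPoly (2 * X * p - derivative p) x =
      x * gaussianPoly p x - gaussianPoly (derivative p - X * p) x := by
  simp only [gaussianPoly, eval_sub, eval_mul, eval_X, eval_ofNat]
  ring

theorem integral_cexp_mul_exp_neg_sq_div_two (y : ℝ) :
    ∫ x : ℝ, cexp (I * x * y) * (Real.exp (-x ^ 2 / 2) : ℂ) =
      (√(2 * π) : ℂ) * (Real.exp (-y ^ 2 / 2) : ℂ) := by
  have hsqrt : ((π : ℂ) / (1 / 2)) ^ (1 / 2 : ℂ) = (√(2 * π) : ℂ) := by
    rw [Real.sqrt_eq_rpow, ofReal_cpow (by positivity)]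
    push_cast
    ring_nf
  have h := fourierIntegral_gaussian (b := 1 / 2) (by norm_num) y
  rw [hsqrt] at h
  convert h using 3 <;> push_cast <;> ring_nf

theorem integral_cexp_mul_gaussianPoly_two_X_mul_sub_derivative {p : ℝ[X]} {c : ℂ}
    (heig : ∀ y : ℝ, ∫ x : ℝ, cexp (I * x * y) * (gaussianPoly p x : ℂ) = c * gaussianPoly p y)
    (y : ℝ) :
    ∫ x : ℝ, cexp (I * x * y) * (gaussianPoly (2 * X * p - derivative p) x : ℂ) =
      I * c * gaussianPoly (2 * X * p - derivative p) y := by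
  have hint (q : ℝ[X]) : Integrable fun x : ℝ => (gaussianPoly q x : ℂ) :=
    (integrable_gaussianPoly q).ofReal
  have hxint : Integrable fun x : ℝ => x • (gaussianPoly p x : ℂ) := by
    have hX := hint (X * p)
    simp only [gaussianPoly_X_mul, ofReal_mul] at hX
    simpa only [Complex.real_smul] using hX
  have h := integral_cexp_mul_smul_sub_deriv (hint p) hxint
    (fun x => (hasDerivAt_gaussianPoly p x).ofReal_comp) (hint _)
    (by simpa only [smul_eq_mul] using heig) y
  simp only [smul_eq_mul, Complex.real_smul] at h
  simpa only [gaussianPoly_two_X_mul_sub_derivative, ofReal_sub, ofReal_mul] using h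

theorem integral_cexp_mul_gaussianPoly_physHermitePoly (n : ℕ) (y : ℝ) :
    ∫ x : ℝ, cexp (I * x * y) * (gaussianPoly (physHermitePoly n) x : ℂ) =
      √(2 * π) * I ^ n * gaussianPoly (physHermitePoly n) y := by
  induction n generalizing y with
  | zero => simpa [gaussianPoly, physHermitePoly] using integral_cexp_mul_exp_neg_sq_div_two y
  | succ n ih =>
    rw [physHermitePoly, integral_cexp_mul_gaussianPoly_two_X_mul_sub_derivative ih, pow_succ]
    ring

theorem hermiteFun_eq_mul_gaussianPoly (m : ℕ) (x : ℝ) :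
    hermiteFun m x = ((2 : ℝ) ^ m * (m.factorial : ℝ) * √π) ^ (-(1 : ℝ) / 2) *
      gaussianPoly (physHermitePoly m) x := by
  rw [hermiteFun, physHermite_eq_eval, gaussianPoly, mul_assoc]

/-- The Hermite functions are eigenfunctions of the Fourier transform:
`∫ e^{ixy} ψ_m(x) dx = √(2π)·iᵐ·ψ_m(y)`. -/
theorem stmt_11 (m : ℕ) (y : ℝ) :
    ∫ x : ℝ, Complex.exp (Complex.I * x * y) * ((hermiteFun m x : ℝ) : ℂ) =
      ((Real.sqrt (2 * Real.pi) : ℝ) : ℂ) * Complex.I ^ m * ((hermiteFun m y : ℝ) : ℂ) := by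
  simp only [hermiteFun_eq_mul_gaussianPoly, ofReal_mul, mul_left_comm (cexp _)]
  rw [integral_const_mul, integral_cexp_mul_gaussianPoly_physHermitePoly]
  ring
end

section
/- Let θ ∈ ℝ satisfy e·|θ| ≤ 1/2 (e being Euler's number), and let a, k, m₁, m₂ ∈ ℕ satisfy a ≥ 1, k ≥ a, 2m₁ ≤ a and 2m₂ ≤ a. Then (|θ|^k / k!) · √(∏_{i=1}^{k} (m₁+i)(m₂+i)) ≤ (3/4)^k. -/
/-!
Each factor satisfies `m_j + i ≤ k/2 + k`, so the square root is at most `(3k/2)^k`.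
Then `k^k / k! ≤ e^k` (a single term of the series of `e^k`) turns the left-hand side into
at most `(3/2 · e|θ|)^k ≤ (3/4)^k`.
-/

open Finset Real

lemma Real.sqrt_prod_le_pow_card {ι : Type*} (s : Finset ι) {f : ι → ℝ} {c : ℝ} (hc : 0 ≤ c)
    (hf₀ : ∀ i ∈ s, 0 ≤ f i) (hf : ∀ i ∈ s, f i ≤ c ^ 2) : √(∏ i ∈ s, f i) ≤ c ^ #s := by
  rw [sqrt_prod s hf₀, ← prod_const]
  exact prod_le_prod (fun _ _ => sqrt_nonneg _) fun i hi =>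
    (sqrt_le_sqrt (hf i hi)).trans_eq (sqrt_sq hc)

lemma cast_add_mul_add_le_sq {m₁ m₂ i k : ℕ} (h₁ : 2 * m₁ ≤ k) (h₂ : 2 * m₂ ≤ k) (hi : i ≤ k) :
    (((m₁ + i) * (m₂ + i) : ℕ) : ℝ) ≤ (3 * k / 2) ^ 2 := by
  have hi' : (i : ℝ) ≤ k := by exact_mod_cast hi
  have hm₁ : (m₁ : ℝ) + i ≤ 3 * k / 2 := by
    have : (2 * m₁ : ℝ) ≤ k := by exact_mod_cast h₁
    linarith
  have hm₂ : (m₂ : ℝ) + i ≤ 3 * k / 2 := by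
    have : (2 * m₂ : ℝ) ≤ k := by exact_mod_cast h₂
    linarith
  push_cast
  rw [sq]
  exact mul_le_mul hm₁ hm₂ (by positivity) (by positivity)

lemma pow_mul_pow_div_factorial_le {x : ℝ} (hx : 0 ≤ x) (k : ℕ) :
    x ^ k * k ^ k / k.factorial ≤ (exp 1 * x) ^ k :=
  calc x ^ k * k ^ k / k.factorial = x ^ k * (k ^ k / k.factorial) := mul_div_assoc _ _ _
    _ ≤ x ^ k * exp 1 ^ k := by
      rw [exp_one_pow]
      gcongr
      exact pow_div_factorial_le_exp _ (Nat.cast_nonneg k) k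
    _ = (exp 1 * x) ^ k := by rw [mul_pow, mul_comm]

theorem stmt_15_general (θ : ℝ) (hθ : Real.exp 1 * |θ| ≤ 1 / 2)
    (a k m₁ m₂ : ℕ) (hk : a ≤ k) (h₁ : 2 * m₁ ≤ a) (h₂ : 2 * m₂ ≤ a) :
    |θ| ^ k / (Nat.factorial k : ℝ) *
        Real.sqrt (∏ i ∈ Finset.Icc 1 k, (((m₁ + i) * (m₂ + i) : ℕ) : ℝ)) ≤
      (3 / 4 : ℝ) ^ k := by
  have hsqrt : √(∏ i ∈ Icc 1 k, (((m₁ + i) * (m₂ + i) : ℕ) : ℝ)) ≤ (3 * k / 2) ^ k := by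
    simpa using sqrt_prod_le_pow_card (Icc 1 k) (by positivity) (fun _ _ => by positivity)
      fun i hi => cast_add_mul_add_le_sq (h₁.trans hk) (h₂.trans hk) (mem_Icc.1 hi).2
  calc |θ| ^ k / k.factorial * √(∏ i ∈ Icc 1 k, (((m₁ + i) * (m₂ + i) : ℕ) : ℝ))
      ≤ |θ| ^ k / k.factorial * (3 * k / 2) ^ k := by gcongr
    _ = (3 / 2 * |θ|) ^ k * k ^ k / k.factorial := by ring
    _ ≤ (exp 1 * (3 / 2 * |θ|)) ^ k := pow_mul_pow_div_factorial_le (by positivity) k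
    _ ≤ (3 / 4) ^ k := by gcongr; linarith

/-- If `e·|θ| ≤ 1/2`, `a ≥ 1`, `k ≥ a`, `2m₁ ≤ a`, `2m₂ ≤ a`, then
`(|θ|^k / k!)·√(∏_{i=1}^k (m₁+i)(m₂+i)) ≤ (3/4)^k`. -/
theorem stmt_15 (θ : ℝ) (hθ : Real.exp 1 * |θ| ≤ 1 / 2)
    (a k m₁ m₂ : ℕ) (ha : 1 ≤ a) (hk : a ≤ k) (h₁ : 2 * m₁ ≤ a) (h₂ : 2 * m₂ ≤ a) :
    |θ| ^ k / (Nat.factorial k : ℝ) *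
        Real.sqrt (∏ i ∈ Finset.Icc 1 k, (((m₁ + i) * (m₂ + i) : ℕ) : ℝ)) ≤
      (3 / 4 : ℝ) ^ k :=
  stmt_15_general θ hθ a k m₁ m₂ hk h₁ h₂
end

section
/- Fix integers n ≥ 1 and M ≥ 0, and let m = (m₁,…,m_n) ∈ ℕⁿ with m₁ + ⋯ + m_n = M. For 1 ≤ k ≤ n−1 set S_k := Σ_{i=k+1}^{n} m_i, and let N := C(M + n − 1, n − 1). Then the number of tuples m' ∈ ℕⁿ with m'₁ + ⋯ + m'_n = M that are lexicographically strictly smaller than m equals (as an integer) N − 1 + Σ_{k=1}^{n−1} [ C(S_k + n − k − 1, n − k − 1) − C(S_k + n − k, n − k) ]. -/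
open Finset

/-- Hockey stick, cut form, in ℤ. -/
lemma myKey (d : ℕ) : ∀ c r : ℕ, c ≤ r →
    (∑ t ∈ range c, ((r - t + d).choose d : ℤ)) =
      ((r + d + 1).choose (d + 1) : ℤ) - ((r - c + d + 1).choose (d + 1) : ℤ) := by
  intro c
  induction c with
  | zero => simp
  | succ c ih =>
    intro r hr
    rw [Finset.sum_range_succ, ih r (by omega)]
    have h1 : r - (c+1) + d + 1 = r - c + d := by omega
    have h2 : ((r - c + d + 1).choose (d + 1) : ℤ)
        = ((r - c + d).choose d : ℤ) + ((r - c + d).choose (d+1) : ℤ) := by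
      rw [show r - c + d + 1 = (r - c + d) + 1 from rfl, Nat.choose_succ_succ]
      push_cast; ring
    rw [h1, h2]; ring

lemma card_adt (k : ℕ) : ∀ s : ℕ, (Finset.Nat.antidiagonalTuple (k+1) s).card = (s + k).choose k := by
  induction k with
  | zero => intro s; simp
  | succ k ih =>
    intro s
    have hsplit : (Finset.Nat.antidiagonalTuple (k+2) s).card
        = ((range (s+1)).sigma (fun t => Finset.Nat.antidiagonalTuple (k+1) (s - t))).card := by
      apply Finset.card_nbij' (fun f => ⟨f 0, Fin.tail f⟩)
        (fun p => Fin.cons p.1 p.2)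
      · intro f hf
        rw [Finset.mem_coe, Finset.Nat.mem_antidiagonalTuple] at hf
        rw [Fin.sum_univ_succ] at hf
        simp only [Finset.mem_coe, Finset.mem_sigma, Finset.mem_range, Finset.Nat.mem_antidiagonalTuple]
        constructor
        · omega
        · unfold Fin.tail; omega
      · intro p hp
        simp only [Finset.mem_coe, Finset.mem_sigma, Finset.mem_range, Finset.Nat.mem_antidiagonalTuple] at hp ⊢
        rw [Fin.sum_univ_succ]
        simp only [Fin.cons_zero, Fin.cons_succ]
        omega
      · intro f _; exact Fin.cons_self_tail f
      · intro p _
        simp [Fin.tail_cons]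
    rw [hsplit, Finset.card_sigma]
    have hz : (∑ t ∈ range (s+1), ((Finset.Nat.antidiagonalTuple (k+1) (s-t)).card : ℤ))
        = ((s + (k+1)).choose (k+1) : ℤ) := by
      have : ∀ t ∈ range (s+1),
          ((Finset.Nat.antidiagonalTuple (k+1) (s-t)).card : ℤ) = ((s - t + k).choose k : ℤ) := by
        intro t _; exact_mod_cast ih (s - t)
      rw [Finset.sum_congr rfl this, Finset.sum_range_succ, myKey k s s le_rfl,
        Nat.sub_self]
      simp only [Nat.zero_add, Nat.choose_self, Nat.cast_one,
        show s + (k+1) = s + k + 1 from rfl]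
      ring
    exact_mod_cast hz

lemma sum_split (n j : ℕ) (hj : j < n) (f : Fin n → ℕ) :
    ∑ i, f i = (∑ i ∈ univ.filter (fun i : Fin n => (i:ℕ) ≤ j), f i)
      + ∑ x : Fin (n - (j+1)), f ⟨j+1+(x:ℕ), by omega⟩ := by
  rw [← Finset.sum_filter_add_sum_filter_not univ (fun i : Fin n => (i:ℕ) ≤ j) f]
  congr 1
  refine Finset.sum_bij'
    (i := fun (a : Fin n) (ha : a ∈ univ.filter (fun i : Fin n => ¬ (i:ℕ) ≤ j)) =>
      (⟨(a:ℕ) - (j+1), by simp at ha; omega⟩ : Fin (n-(j+1))))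
    (j := fun (x : Fin (n-(j+1))) _ => (⟨j+1+(x:ℕ), by omega⟩ : Fin n))
    ?_ ?_ ?_ ?_ ?_
  · intro a ha; exact Finset.mem_univ _
  · intro x _
    simp only [Finset.mem_filter, Finset.mem_univ, true_and, not_le]
    omega
  · intro a ha; simp only [Finset.mem_filter, Finset.mem_univ, true_and, not_le] at ha
    apply Fin.ext; simp only [Fin.val_mk]; omega
  · intro x _; apply Fin.ext; simp only [Fin.val_mk]; omega
  · intro a ha; simp only [Finset.mem_filter, Finset.mem_univ, true_and, not_le] at ha
    congr 1; apply Fin.ext; simp only [Fin.val_mk]; omega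

lemma sum_split' (n j : ℕ) (hj : j < n) (f : Fin n → ℕ) (g : Fin (n - (j+1)) → ℕ)
    (hfg : ∀ x : Fin (n - (j+1)), f ⟨j+1+(x:ℕ), by omega⟩ = g x) :
    ∑ i, f i = (∑ i ∈ univ.filter (fun i : Fin n => (i:ℕ) ≤ j), f i) + ∑ x, g x := by
  rw [sum_split n j hj f]
  congr 1
  exact Finset.sum_congr rfl fun x _ => hfg x

lemma card_fix (n M j : ℕ) (hj : j < n) (w : Fin n → ℕ)
    (hw : ∑ i ∈ univ.filter (fun i : Fin n => (i:ℕ) ≤ j), w i ≤ M) :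
    ((Finset.Nat.antidiagonalTuple n M).filter
        (fun f => ∀ i : Fin n, (i:ℕ) ≤ j → f i = w i)).card
      = (Finset.Nat.antidiagonalTuple (n - (j+1))
          (M - ∑ i ∈ univ.filter (fun i : Fin n => (i:ℕ) ≤ j), w i)).card := by
  set W := ∑ i ∈ univ.filter (fun i : Fin n => (i:ℕ) ≤ j), w i with hW
  clear_value W
  refine Finset.card_nbij'
    (i := fun f => fun x : Fin (n-(j+1)) => f ⟨j+1+(x:ℕ), by omega⟩)
    (j := fun g => fun x : Fin n => if (x:ℕ) ≤ j then w x
      else (if h2 : (x:ℕ) - (j+1) < n - (j+1) then g ⟨(x:ℕ) - (j+1), h2⟩ else 0))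
    ?_ ?_ ?_ ?_
  · intro f hf
    simp only [Finset.mem_coe, Finset.mem_filter, Finset.Nat.mem_antidiagonalTuple] at hf
    obtain ⟨hsum, hpre⟩ := hf
    rw [Finset.mem_coe, Finset.Nat.mem_antidiagonalTuple]
    have hs := sum_split' n j hj f (fun x : Fin (n-(j+1)) => f ⟨j+1+(x:ℕ), by omega⟩)
      (fun x => rfl)
    have hpw : ∑ i ∈ univ.filter (fun i : Fin n => (i:ℕ) ≤ j), f i = W := by
      rw [hW]
      apply Finset.sum_congr rfl
      intro i hi; simp only [Finset.mem_filter, Finset.mem_univ, true_and] at hi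
      exact hpre i hi
    rw [hpw] at hs
    rw [hs] at hsum
    dsimp only at hsum ⊢
    omega
  · intro g hg
    rw [Finset.mem_coe, Finset.Nat.mem_antidiagonalTuple] at hg
    simp only [Finset.mem_coe, Finset.mem_filter, Finset.Nat.mem_antidiagonalTuple]
    refine ⟨?_, ?_⟩
    · have hs := sum_split' n j hj
        (fun x : Fin n => if (x:ℕ) ≤ j then w x
          else (if h2 : (x:ℕ) - (j+1) < n - (j+1) then g ⟨(x:ℕ) - (j+1), h2⟩ else 0))
        g (by
          intro x
          have hx := x.isLt
          dsimp only [Fin.val_mk]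
          rw [if_neg (by omega), dif_pos (by omega)]
          congr 1; apply Fin.ext; simp only [Fin.val_mk]; omega)
      have h1 : ∑ i ∈ univ.filter (fun i : Fin n => (i:ℕ) ≤ j),
          (if (i:ℕ) ≤ j then w i
            else (if h2 : (i:ℕ) - (j+1) < n - (j+1) then g ⟨(i:ℕ) - (j+1), h2⟩ else 0)) = W := by
        rw [hW]
        apply Finset.sum_congr rfl
        intro i hi; simp only [Finset.mem_filter, Finset.mem_univ, true_and] at hi
        rw [if_pos hi]
      omega
    · intro i hi; rw [if_pos hi]
  · intro f hf
    simp only [Finset.mem_coe, Finset.mem_filter, Finset.Nat.mem_antidiagonalTuple] at hf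
    funext x
    show (if (x:ℕ) ≤ j then w x
      else (if h2 : (x:ℕ) - (j+1) < n - (j+1)
        then f ⟨j+1+((x:ℕ) - (j+1)), by omega⟩ else 0)) = f x
    by_cases h : (x:ℕ) ≤ j
    · rw [if_pos h]; exact (hf.2 x h).symm
    · have hx := x.isLt
      rw [if_neg h, dif_pos (by omega)]
      congr 1; apply Fin.ext; simp only [Fin.val_mk]; omega
  · intro g hg
    funext x
    have hx := x.isLt
    show (if (j+1+(x:ℕ)) ≤ j then w _
      else (if h2 : (j+1+(x:ℕ)) - (j+1) < n - (j+1)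
        then g ⟨(j+1+(x:ℕ)) - (j+1), h2⟩ else 0)) = g x
    rw [if_neg (by omega), dif_pos (by omega)]
    congr 1; apply Fin.ext; simp only [Fin.val_mk]; omega

lemma per_j (n M : ℕ) (m : Fin n → ℕ) (hm : ∑ i, m i = M) (j : Fin n) :
    ((Finset.Nat.antidiagonalTuple n M).filter
      (fun f => (∀ i : Fin n, i < j → f i = m i) ∧ f j < m j)).card
    = ∑ t ∈ range (m j), (Finset.Nat.antidiagonalTuple (n - ((j:ℕ)+1))
        ((∑ i ∈ univ.filter (fun i : Fin n => (j:ℕ) ≤ (i:ℕ)), m i) - t)).card := by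
  classical
  set Sj := ∑ i ∈ univ.filter (fun i : Fin n => (j:ℕ) ≤ (i:ℕ)), m i with hSj
  set wt : ℕ → Fin n → ℕ := fun t i => if (i:ℕ) = (j:ℕ) then t else m i with hwt
  clear_value wt
  have hmem : j ∈ univ.filter (fun i : Fin n => (j:ℕ) ≤ (i:ℕ)) := by simp
  have hmj : m j ≤ Sj := by
    rw [hSj]; exact Finset.single_le_sum (fun i _ => Nat.zero_le _) hmem
  have hB : (∑ i ∈ univ.filter (fun i : Fin n => (i:ℕ) < (j:ℕ)), m i) + Sj = M := by
    rw [hSj, ← hm, ← Finset.sum_filter_add_sum_filter_not univ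
      (fun i : Fin n => (i:ℕ) < (j:ℕ)) m]
    congr 1
    apply Finset.sum_congr _ (fun _ _ => rfl)
    apply Finset.filter_congr
    intro i _; simp [not_lt]
  have hins : univ.filter (fun i : Fin n => (i:ℕ) ≤ (j:ℕ))
      = insert j (univ.filter (fun i : Fin n => (i:ℕ) < (j:ℕ))) := by
    ext i
    simp only [Finset.mem_filter, Finset.mem_univ, true_and, Finset.mem_insert]
    rw [Fin.ext_iff]
    omega
  have hA : ∀ t : ℕ, ∑ i ∈ univ.filter (fun i : Fin n => (i:ℕ) ≤ (j:ℕ)), wt t i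
      = (∑ i ∈ univ.filter (fun i : Fin n => (i:ℕ) < (j:ℕ)), m i) + t := by
    intro t
    rw [hins, Finset.sum_insert (by simp)]
    simp only [hwt, if_true, eq_self_iff_true]
    have : ∀ i ∈ univ.filter (fun i : Fin n => (i:ℕ) < (j:ℕ)),
        (if (i:ℕ) = (j:ℕ) then t else m i) = m i := by
      intro i hi; simp only [Finset.mem_filter, Finset.mem_univ, true_and] at hi
      rw [if_neg (by omega)]
    rw [Finset.sum_congr rfl this]
    exact Nat.add_comm _ _
  have hdecomp : ((Finset.Nat.antidiagonalTuple n M).filter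
      (fun f => (∀ i : Fin n, i < j → f i = m i) ∧ f j < m j))
    = (range (m j)).biUnion (fun t => (Finset.Nat.antidiagonalTuple n M).filter
        (fun f => ∀ i : Fin n, (i:ℕ) ≤ (j:ℕ) → f i = wt t i)) := by
    ext f
    simp only [Finset.mem_filter, Finset.mem_biUnion, Finset.mem_range]
    constructor
    · rintro ⟨hfF, hpre, hlt⟩
      refine ⟨f j, hlt, hfF, ?_⟩
      intro i hi
      rcases Nat.lt_or_ge (i:ℕ) (j:ℕ) with h | h
      · simp only [hwt]; rw [if_neg (by omega)]
        exact hpre i (by rwa [Fin.lt_def])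
      · have : i = j := Fin.ext (by omega)
        subst this
        simp [hwt]
    · rintro ⟨t, htm, hfF, hall⟩
      have hfj : f j = t := by
        have := hall j le_rfl
        simp [hwt] at this; exact this
      refine ⟨hfF, ?_, by omega⟩
      intro i hi
      rw [Fin.lt_def] at hi
      have := hall i (by omega)
      simp only [hwt] at this; rwa [if_neg (by omega)] at this
  rw [hdecomp, Finset.card_biUnion]
  · apply Finset.sum_congr rfl
    intro t ht
    rw [Finset.mem_range] at ht
    have hWle : ∑ i ∈ univ.filter (fun i : Fin n => (i:ℕ) ≤ (j:ℕ)), wt t i ≤ M := by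
      rw [hA t]; omega
    rw [card_fix n M (j:ℕ) j.isLt (wt t) hWle, hA t]
    congr 2
    omega
  · intro t _ t' _ htt'
    rw [Function.onFun, Finset.disjoint_left]
    intro f hf hf'
    simp only [Finset.mem_filter] at hf hf'
    have h1 := hf.2 j le_rfl
    have h2 := hf'.2 j le_rfl
    simp [hwt] at h1 h2
    exact htt' (h1 ▸ h2 ▸ rfl)

/-- The rank of a weak composition `m` of `M` into `n` parts in the
ascending lexicographic ordering (i.e. the number of weak compositions `m'` of `M` into
`n` parts with `m' <_lex m`) equals, in `ℤ`,
`N - 1 + ∑_{k=1}^{n-1} [C(S_k + n - k - 1, n - k - 1) - C(S_k + n - k, n - k)]`,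
where `S_k = ∑_{i=k+1}^{n} m_i` and `N = C(M + n - 1, n - 1)`. -/
theorem stmt_18 (n M : ℕ) (hn : 1 ≤ n) (m : Fin n → ℕ) (hm : ∑ i, m i = M)
    (S : ℕ → ℕ)
    (hS : ∀ k : ℕ, S k = ∑ i ∈ Finset.univ.filter (fun i : Fin n => k ≤ (i : ℕ)), m i)
    (N : ℕ) (hN : N = (M + n - 1).choose (n - 1)) :
    (Set.ncard {m' : Fin n → ℕ | (∑ i, m' i) = M ∧
        ∃ j : Fin n, (∀ i : Fin n, i < j → m' i = m i) ∧ m' j < m j} : ℤ) =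
      (N : ℤ) - 1 +
        ∑ k ∈ Finset.Icc 1 (n - 1),
          (((S k + n - k - 1).choose (n - k - 1) : ℤ) -
            ((S k + n - k).choose (n - k) : ℤ)) := by
  classical
  -- basic S facts
  have hrec : ∀ j : Fin n, m j + S ((j:ℕ)+1) = S (j:ℕ) := by
    intro j
    rw [hS, hS]
    have hins : univ.filter (fun i : Fin n => (j:ℕ) ≤ (i:ℕ))
        = insert j (univ.filter (fun i : Fin n => (j:ℕ)+1 ≤ (i:ℕ))) := by
      ext i
      simp only [Finset.mem_filter, Finset.mem_univ, true_and, Finset.mem_insert, Fin.ext_iff]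
      omega
    rw [hins, Finset.sum_insert (by simp)]
  have hS0 : S 0 = M := by
    rw [hS, ← hm]
    apply Finset.sum_congr _ (fun _ _ => rfl)
    simp
  -- set to finset
  have hsets : {m' : Fin n → ℕ | (∑ i, m' i) = M ∧
        ∃ j : Fin n, (∀ i : Fin n, i < j → m' i = m i) ∧ m' j < m j}
      = ↑((Finset.Nat.antidiagonalTuple n M).filter
          (fun f => ∃ j : Fin n, (∀ i : Fin n, i < j → f i = m i) ∧ f j < m j)) := by
    ext f
    simp only [Set.mem_setOf_eq, Finset.coe_filter, Finset.Nat.mem_antidiagonalTuple]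
  rw [hsets, Set.ncard_coe_finset]
  -- partition over the first index of difference
  have hpart : (Finset.Nat.antidiagonalTuple n M).filter
      (fun f => ∃ j : Fin n, (∀ i : Fin n, i < j → f i = m i) ∧ f j < m j)
    = univ.biUnion (fun j : Fin n => (Finset.Nat.antidiagonalTuple n M).filter
        (fun f => (∀ i : Fin n, i < j → f i = m i) ∧ f j < m j)) := by
    ext f
    simp only [Finset.mem_filter, Finset.mem_biUnion, Finset.mem_univ, true_and]
    tauto
  have hdisj : ∀ j ∈ (univ : Finset (Fin n)), ∀ j' ∈ (univ : Finset (Fin n)), j ≠ j' →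
      Disjoint ((Finset.Nat.antidiagonalTuple n M).filter
        (fun f => (∀ i : Fin n, i < j → f i = m i) ∧ f j < m j))
        ((Finset.Nat.antidiagonalTuple n M).filter
        (fun f => (∀ i : Fin n, i < j' → f i = m i) ∧ f j' < m j')) := by
    intro j _ j' _ hjj'
    rw [Finset.disjoint_left]
    intro f hf hf'
    simp only [Finset.mem_filter] at hf hf'
    rcases lt_trichotomy j j' with h | h | h
    · have := hf'.2.1 j h
      have := hf.2.2
      omega
    · exact hjj' h
    · have := hf.2.1 j' h
      have := hf'.2.2
      omega
  rw [hpart, Finset.card_biUnion hdisj]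
  -- per-j evaluation
  set g : ℕ → ℤ := fun k => if k + 1 < n then
      (((S k + (n - k - 1)).choose (n - k - 1) : ℕ) : ℤ)
        - (((S (k+1) + (n - k - 1)).choose (n - k - 1) : ℕ) : ℤ) else 0 with hg
  clear_value g
  have hperj : ∀ j : Fin n, (((Finset.Nat.antidiagonalTuple n M).filter
      (fun f => (∀ i : Fin n, i < j → f i = m i) ∧ f j < m j)).card : ℤ) = g (j:ℕ) := by
    intro j
    have hmj : m j ≤ S (j:ℕ) := by have := hrec j; omega
    by_cases hjn : (j:ℕ) + 1 < n
    · have e1 : n - ((j:ℕ) + 1) = (n - (j:ℕ) - 2) + 1 := by omega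
      have e2 : S (j:ℕ) - m j = S ((j:ℕ)+1) := by have := hrec j; omega
      have e3 : S (j:ℕ) + (n - (j:ℕ) - 2) + 1 = S (j:ℕ) + (n - (j:ℕ) - 1) := by omega
      have e4 : n - (j:ℕ) - 2 + 1 = n - (j:ℕ) - 1 := by omega
      have e5 : S ((j:ℕ)+1) + (n - (j:ℕ) - 2) + 1 = S ((j:ℕ)+1) + (n - (j:ℕ) - 1) := by omega
      have hcard : ((Finset.Nat.antidiagonalTuple n M).filter
          (fun f => (∀ i : Fin n, i < j → f i = m i) ∧ f j < m j)).card
        = ∑ t ∈ range (m j), (Finset.Nat.antidiagonalTuple (n - ((j:ℕ)+1))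
            (S (j:ℕ) - t)).card := by
        rw [per_j n M m hm j, ← hS (j:ℕ)]
      have hcard2 : ∀ t ∈ range (m j), (Finset.Nat.antidiagonalTuple (n - ((j:ℕ)+1))
          (S (j:ℕ) - t)).card = (S (j:ℕ) - t + (n - (j:ℕ) - 2)).choose (n - (j:ℕ) - 2) := by
        intro t _
        rw [e1, card_adt]
      rw [hcard, Finset.sum_congr rfl hcard2]
      push_cast
      rw [myKey (n - (j:ℕ) - 2) (m j) (S (j:ℕ)) hmj]
      rw [hg]
      dsimp only
      rw [if_pos hjn]
      rw [e2, e3, e4, e5]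
    · have h0 : n - ((j:ℕ)+1) = 0 := by have := j.isLt; omega
      have hzero : ∀ t ∈ range (m j), (Finset.Nat.antidiagonalTuple (n - ((j:ℕ)+1))
          (S (j:ℕ) - t)).card = 0 := by
        intro t ht
        rw [Finset.mem_range] at ht
        have h1 : S (j:ℕ) - t = (S (j:ℕ) - t - 1) + 1 := by omega
        rw [h0, h1]
        simp
      have hcard : ((Finset.Nat.antidiagonalTuple n M).filter
          (fun f => (∀ i : Fin n, i < j → f i = m i) ∧ f j < m j)).card
        = ∑ t ∈ range (m j), (Finset.Nat.antidiagonalTuple (n - ((j:ℕ)+1))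
            (S (j:ℕ) - t)).card := by
        rw [per_j n M m hm j, ← hS (j:ℕ)]
      rw [hcard, Finset.sum_congr rfl hzero]
      rw [hg]
      dsimp only
      rw [if_neg hjn]
      simp
  push_cast
  rw [Finset.sum_congr rfl (fun j _ => hperj j)]
  rw [Fin.sum_univ_eq_sum_range g n]
  -- final algebra
  obtain ⟨n', rfl⟩ : ∃ n', n = n' + 1 := ⟨n - 1, by omega⟩
  have hreindex : ∀ h : ℕ → ℤ, ∑ k ∈ Icc 1 n', h k = ∑ k ∈ range n', h (k+1) := by
    intro h
    rw [← Finset.Ico_add_one_right_eq_Icc, Finset.sum_Ico_eq_sum_range]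
    exact Finset.sum_congr (by norm_num) (fun k _ => by rw [Nat.add_comm])
  rw [Finset.sum_range_succ]
  have hglast : g n' = 0 := by rw [hg]; dsimp only; rw [if_neg (by omega)]
  rw [hglast, add_zero]
  have hA : ∀ k ∈ range n', g k
      = (((S k + (n' - k)).choose (n' - k) : ℕ) : ℤ)
        - (((S (k+1) + (n' - k)).choose (n' - k) : ℕ) : ℤ) := by
    intro k hk
    rw [Finset.mem_range] at hk
    rw [hg]
    dsimp only
    rw [if_pos (by omega)]
    have : n' + 1 - k - 1 = n' - k := by omega
    rw [this]
  rw [Finset.sum_congr rfl hA, Finset.sum_sub_distrib]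
  have hRHS : ∀ k ∈ Icc 1 n',
      (((S k + (n'+1) - k - 1).choose ((n'+1) - k - 1) : ℕ) : ℤ)
        - (((S k + (n'+1) - k).choose ((n'+1) - k) : ℕ) : ℤ)
      = (((S k + (n' - k)).choose (n' - k) : ℕ) : ℤ)
        - (((S k + (n'+1-k)).choose (n'+1-k) : ℕ) : ℤ) := by
    intro k hk
    rw [Finset.mem_Icc] at hk
    have e1 : S k + (n'+1) - k - 1 = S k + (n' - k) := by omega
    have e2 : (n'+1) - k - 1 = n' - k := by omega
    have e3 : S k + (n'+1) - k = S k + (n'+1-k) := by omega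
    rw [e1, e2, e3]
  rw [show ((n' + 1 - 1)) = n' from rfl]
  rw [show (∑ k ∈ Icc 1 n',
      ((((S k + (n'+1) - k - 1).choose ((n'+1) - k - 1) : ℕ) : ℤ)
        - (((S k + (n'+1) - k).choose ((n'+1) - k) : ℕ) : ℤ)))
    = ∑ k ∈ Icc 1 n',
      ((((S k + (n' - k)).choose (n' - k) : ℕ) : ℤ)
        - (((S k + (n'+1-k)).choose (n'+1-k) : ℕ) : ℤ)) from Finset.sum_congr rfl hRHS]
  rw [Finset.sum_sub_distrib]
  rw [hreindex (fun k => (((S k + (n' - k)).choose (n' - k) : ℕ) : ℤ)),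
    hreindex (fun k => (((S k + (n'+1-k)).choose (n'+1-k) : ℕ) : ℤ))]
  have hBeq : ∀ k ∈ range n',
      (((S (k+1) + (n'+1-(k+1))).choose (n'+1-(k+1)) : ℕ) : ℤ)
      = (((S (k+1) + (n' - k)).choose (n' - k) : ℕ) : ℤ) := by
    intro k _
    have : n' + 1 - (k+1) = n' - k := by omega
    rw [this]
  rw [Finset.sum_congr rfl hBeq]
  have hNval : (N : ℤ) = (((S 0 + (n' - 0)).choose (n' - 0) : ℕ) : ℤ) := by
    rw [hN, hS0]
    have : M + (n'+1) - 1 = M + (n' - 0) := by omega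
    have e2 : (n'+1) - 1 = n' - 0 := by omega
    rw [this, e2]
  -- remaining: ∑_{range n'} A = N - 1 + ∑_{range n'} A (k+1)  with A n'... case split
  rcases Nat.eq_zero_or_pos n' with h0 | hpos
  · subst h0
    simp only [Finset.range_zero, Finset.sum_empty]
    rw [hN]
    norm_num
  · obtain ⟨n'', rfl⟩ : ∃ n'', n' = n'' + 1 := ⟨n' - 1, by omega⟩
    rw [Finset.sum_range_succ'
      (fun k => (((S k + (n''+1 - k)).choose (n''+1 - k) : ℕ) : ℤ)) n'']
    rw [Finset.sum_range_succ
      (fun k => (((S (k+1) + (n''+1 - (k+1))).choose (n''+1 - (k+1)) : ℕ) : ℤ)) n'']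
    have hlast : (((S (n''+1) + (n''+1 - (n''+1))).choose (n''+1 - (n''+1)) : ℕ) : ℤ) = 1 := by
      have : n''+1 - (n''+1) = 0 := by omega
      rw [this]
      simp
    rw [hlast, hNval]
    have hsame : ∀ k ∈ range n'',
        (((S (k+1) + (n''+1 - (k+1))).choose (n''+1 - (k+1)) : ℕ) : ℤ)
        = (((S (k+1) + (n'' - k)).choose (n'' - k) : ℕ) : ℤ) := by
      intro k _
      have : n''+1 - (k+1) = n'' - k := by omega
      rw [this]
    rw [Finset.sum_congr rfl hsame]
    ring
end
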